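/- Let 𝓛(θ) = −∫₀^θ ln|2 sin t| dt (the Lobachevsky function) and define f(x) = 𝓛(π/4 + π/(2x)) + 𝓛(π/4 − π/(2x)) for real x. Then f is strictly increasing on the open interval (2, ∞). -/
import Mathlib

open Real MeasureTheory intervalIntegral Set

/-- The Lobachevsky function `𝓛(θ) = -∫₀^θ ln |2 sin t| dt`. -/
noncomputable def lobachevsky (θ : ℝ) : ℝ :=
  -∫ t in (0:ℝ)..θ, Real.log |2 * Real.sin t|

/-- The normalized volume function `f(x) = 𝓛(π/4 + π/(2x)) + 𝓛(π/4 - π/(2x))`. -/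
noncomputable def pretzelVolumeFn (x : ℝ) : ℝ :=
  lobachevsky (Real.pi / 4 + Real.pi / (2 * x)) +
    lobachevsky (Real.pi / 4 - Real.pi / (2 * x))

lemma log_two_sin_integrable :
    IntervalIntegrable (fun t => Real.log |2 * Real.sin t|) volume 0 (π / 2) := by
  have hg : IntervalIntegrable
      (fun t : ℝ => 2 * t ^ (-(1/2) : ℝ) + t + Real.log 2) volume 0 (π / 2) := by
    exact (((intervalIntegrable_rpow' (by norm_num)).const_mul 2).add
      intervalIntegrable_id).add intervalIntegrable_const
  refine hg.mono_fun' ?_ ?_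
  · exact (Measurable.aestronglyMeasurable (by measurability))
  · rw [Set.uIoc_of_le (by positivity)]
    filter_upwards [ae_restrict_mem measurableSet_Ioc] with t ht
    obtain ⟨ht0, ht2⟩ := ht
    have hsinpos : 0 < Real.sin t :=
      Real.sin_pos_of_pos_of_lt_pi ht0 (lt_of_le_of_lt ht2 (by linarith [Real.pi_pos]))
    have hsinle : Real.sin t ≤ t := Real.sin_le ht0.le
    have hsinge : t / 2 ≤ Real.sin t := by
      have h1 := Real.mul_le_sin ht0.le ht2
      have h2 := Real.pi_le_four
      have h3 := Real.pi_pos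
      have h4 : (1:ℝ)/2 ≤ 2/π := by
        rw [div_le_div_iff₀ (by norm_num) h3]; linarith
      nlinarith [mul_le_mul_of_nonneg_right h4 ht0.le]
    have habs : |2 * Real.sin t| = 2 * Real.sin t := abs_of_pos (by linarith)
    have hup : Real.log (2 * Real.sin t) ≤ Real.log 2 + Real.log t := by
      rw [← Real.log_mul two_ne_zero (ne_of_gt ht0)]
      exact Real.log_le_log (by linarith) (by linarith)
    have hlo : Real.log t ≤ Real.log (2 * Real.sin t) :=
      Real.log_le_log ht0 (by linarith)
    have hrpos : (0:ℝ) < t ^ (-(1/2) : ℝ) := Real.rpow_pos_of_pos ht0 _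
    have hlogt : |Real.log t| ≤ 2 * t ^ (-(1/2) : ℝ) + t := by
      rcases le_total t 1 with h1 | h1
      · have hneg : Real.log t ≤ 0 := Real.log_nonpos ht0.le h1
        rw [abs_of_nonpos hneg]
        have key : Real.log (t ^ (-(1/2) : ℝ)) ≤ t ^ (-(1/2) : ℝ) - 1 :=
          Real.log_le_sub_one_of_pos hrpos
        rw [Real.log_rpow ht0] at key
        linarith
      · rw [abs_of_nonneg (Real.log_nonneg h1)]
        have := Real.log_le_sub_one_of_pos ht0
        linarith
    have hlog2 : (0:ℝ) ≤ Real.log 2 := Real.log_nonneg one_le_two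
    rw [Real.norm_eq_abs, habs]
    have : |Real.log (2 * Real.sin t)| ≤ |Real.log t| + Real.log 2 := by
      rw [abs_le]
      refine ⟨?_, ?_⟩
      · have := neg_abs_le (Real.log t); linarith
      · have := le_abs_self (Real.log t); linarith
    linarith

lemma lob_sub {c d : ℝ} (hc : c ∈ Set.Icc 0 (π/2)) (hd : d ∈ Set.Icc 0 (π/2)) :
    lobachevsky d - lobachevsky c = -∫ t in c..d, Real.log |2 * Real.sin t| := by
  have hid : ∀ {e : ℝ}, e ∈ Set.Icc 0 (π/2) →
      IntervalIntegrable (fun t => Real.log |2 * Real.sin t|) volume 0 e := by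
    intro e he
    refine log_two_sin_integrable.mono_set ?_
    rw [Set.uIcc_of_le he.1, Set.uIcc_of_le (by positivity)]
    exact Set.Icc_subset_Icc le_rfl he.2
  have key := intervalIntegral.integral_interval_sub_left (hid hd) (hid hc)
  rw [lobachevsky, lobachevsky, neg_sub_neg, ← key, neg_sub]

lemma cont_aux {A B sh : ℝ} (h0 : 0 < A + sh) (h1 : B + sh < π) (hAB : A ≤ B) :
    ContinuousOn (fun s => Real.log |2 * Real.sin (s + sh)|) (Set.Icc A B) := by
  apply ContinuousOn.log
  · exact (continuous_abs.comp (continuous_const.mul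
      (Real.continuous_sin.comp (continuous_id.add continuous_const)))).continuousOn
  · intro x hx
    simp only [abs_ne_zero]
    refine mul_ne_zero two_ne_zero (ne_of_gt (Real.sin_pos_of_pos_of_lt_pi ?_ ?_))
    · linarith [hx.1]
    · linarith [hx.2]

lemma key_lemma {u v : ℝ} (hv0 : 0 < v) (hvu : v < u) (hu4 : u < π / 4) :
    lobachevsky (π/4 + u) + lobachevsky (π/4 - u) <
      lobachevsky (π/4 + v) + lobachevsky (π/4 - v) := by
  have hpi := Real.pi_pos
  have hA0 : 0 < π/4 - u := by linarith
  have hAB : π/4 - u < π/4 - v := by linarith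
  -- integrability of the two integrands on [π/4-u, π/4-v]
  have hint1 : IntervalIntegrable (fun s => Real.log |2 * Real.sin (s + (u + v))|)
      volume (π/4 - u) (π/4 - v) := by
    apply ContinuousOn.intervalIntegrable
    rw [Set.uIcc_of_le hAB.le]
    exact cont_aux (by linarith) (by linarith) hAB.le
  have hint2 : IntervalIntegrable (fun s => Real.log |2 * Real.sin s|)
      volume (π/4 - u) (π/4 - v) := by
    apply ContinuousOn.intervalIntegrable
    rw [Set.uIcc_of_le hAB.le]
    have := cont_aux (sh := 0) (by linarith) (by linarith) hAB.le
    simpa using this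
  have h1 : lobachevsky (π/4 + v) - lobachevsky (π/4 + u)
      = -∫ t in (π/4 + u)..(π/4 + v), Real.log |2 * Real.sin t| :=
    lob_sub ⟨by linarith, by linarith⟩ ⟨by linarith, by linarith⟩
  have h2 : lobachevsky (π/4 - v) - lobachevsky (π/4 - u)
      = -∫ t in (π/4 - u)..(π/4 - v), Real.log |2 * Real.sin t| :=
    lob_sub ⟨by linarith, by linarith⟩ ⟨by linarith, by linarith⟩
  have hcomp : (∫ s in (π/4 - u)..(π/4 - v), Real.log |2 * Real.sin (s + (u + v))|)
      = ∫ t in (π/4 + v)..(π/4 + u), Real.log |2 * Real.sin t| := by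
    have := intervalIntegral.integral_comp_add_right
      (a := π/4 - u) (b := π/4 - v) (fun t => Real.log |2 * Real.sin t|) (u + v)
    rw [this]
    norm_num
    ring_nf
  have hsub : (∫ s in (π/4 - u)..(π/4 - v),
        (Real.log |2 * Real.sin (s + (u + v))| - Real.log |2 * Real.sin s|))
      = (∫ s in (π/4 - u)..(π/4 - v), Real.log |2 * Real.sin (s + (u + v))|)
        - ∫ s in (π/4 - u)..(π/4 - v), Real.log |2 * Real.sin s| :=
    intervalIntegral.integral_sub hint1 hint2
  have hpos : 0 < ∫ s in (π/4 - u)..(π/4 - v),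
      (Real.log |2 * Real.sin (s + (u + v))| - Real.log |2 * Real.sin s|) := by
    apply intervalIntegral_pos_of_pos_on (hint1.sub hint2) _ hAB
    intro x hx
    obtain ⟨hx1, hx2⟩ := hx
    have hx0 : 0 < x := by linarith
    have hxd2 : x + (u + v) < π / 2 := by linarith
    have hsin1 : 0 < Real.sin x := Real.sin_pos_of_pos_of_lt_pi hx0 (by linarith)
    have hsin2 : Real.sin x < Real.sin (x + (u + v)) := by
      apply Real.strictMonoOn_sin ⟨by linarith, by linarith⟩ ⟨by linarith, by linarith⟩
      linarith
    rw [abs_of_pos (by linarith), abs_of_pos (by linarith), sub_pos]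
    exact Real.log_lt_log (by linarith) (by linarith)
  have hsym : (∫ t in (π/4 + u)..(π/4 + v), Real.log |2 * Real.sin t|)
      = -∫ t in (π/4 + v)..(π/4 + u), Real.log |2 * Real.sin t| :=
    intervalIntegral.integral_symm _ _
  rw [hsub, hcomp] at hpos
  rw [hsym] at h1
  linarith

theorem pretzelVolumeFn_strictMonoOn :
    StrictMonoOn pretzelVolumeFn (Set.Ioi (2 : ℝ)) := by
  intro a ha b hb hab
  rw [Set.mem_Ioi] at ha hb
  have hpi := Real.pi_pos
  have hv0 : 0 < π / (2 * b) := by positivity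
  have hvu : π / (2 * b) < π / (2 * a) := by
    apply div_lt_div_of_pos_left hpi (by linarith)
    linarith
  have hu4 : π / (2 * a) < π / 4 := by
    rw [div_lt_div_iff₀ (by linarith) (by norm_num)]
    nlinarith
  exact key_lemma hv0 hvu hu4
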